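/- arXiv:2403.09695 — 5 statements merged into one kernel-verified Lean document; each statement's English description precedes it below -/
import Mathlib

section
/- For a, b > 0 with a + b ≤ 1, and for all x ≥ c(a,b), the quantity S(a,b,x) = 1 - a²b²/((a+b+1)(a+b)) - ab(a+1)(b+1)(a+b+ab+2)/((a+b)(a+b+1)(a+b+2)) · x is strictly negative, where c(a,b) = (a+b)(a+b-2ab)(a+b+1)/(ab((a+b+1)(a+b-2ab)+ab(a+b))). -/
/-!
Write `s = a + b` and `p = a b`, so `p ≤ s² / 4` and `s ≤ 1`. The expression is affine in `x`
with negative slope, so it suffices to check it at the threshold `x = c`. There it equals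
`-p Q(s, p) / (s (s + 1) (s + 2) E)` with `E = (s + 1)(s - 2p) + p s > 0` and
`Q(s, p) = s² (s + 1)² - 2 p s (s + 1)(s + 2) - p² (3 s² + 6 s + 4)`, which is positive
whenever `0 < p ≤ s² / 4` and `s ≤ 1`.
-/

namespace Threshold

variable {s p : ℝ}

lemma quartic_pos (hs : 0 < s) (hs1 : s ≤ 1) (hp : 0 < p) (hps : 4 * p ≤ s ^ 2) :
    0 < s ^ 2 * (s + 1) ^ 2 - 2 * p * s * (s + 1) * (s + 2) - p ^ 2 * (3 * s ^ 2 + 6 * s + 4) := by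
  -- Compare with the value at the endpoint `p = s² / 4` of the admissible range.
  have hsplit : s ^ 2 * (s + 1) ^ 2 - 2 * p * s * (s + 1) * (s + 2) - p ^ 2 * (3 * s ^ 2 + 6 * s + 4)
      = (s ^ 2 - 4 * p) * (2 * s * (s + 1) * (s + 2) + (3 * s ^ 2 + 6 * s + 4) * (p + s ^ 2 / 4)) / 4
        + s ^ 2 * ((1 - s) * (3 * s ^ 3 + 17 * s ^ 2 + 29 * s + 13) + 3) / 16 := by
    ring
  have hgap : 0 ≤ s ^ 2 - 4 * p := by linarith
  have hs' : 0 ≤ 1 - s := by linarith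
  rw [hsplit]
  positivity

lemma denom_pos (hs : 0 < s) (hs1 : s ≤ 1) (hp : 0 < p) (hps : 4 * p ≤ s ^ 2) :
    0 < (s + 1) * (s - 2 * p) + p * s := by
  have : 0 < s - 2 * p := by nlinarith
  positivity

lemma value_at_threshold (hs : 0 < s) (hp : 0 < p) (hE : (s + 1) * (s - 2 * p) + p * s ≠ 0) :
    1 - p ^ 2 / ((s + 1) * s) - p * (p + s + 1) * (s + p + 2) / (s * (s + 1) * (s + 2))
        * (s * (s - 2 * p) * (s + 1) / (p * ((s + 1) * (s - 2 * p) + p * s)))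
      = -(p * (s ^ 2 * (s + 1) ^ 2 - 2 * p * s * (s + 1) * (s + 2)
          - p ^ 2 * (3 * s ^ 2 + 6 * s + 4)))
        / (s * (s + 1) * (s + 2) * ((s + 1) * (s - 2 * p) + p * s)) := by
  have hs2 : s + 2 ≠ 0 := by positivity
  have hs1 : s + 1 ≠ 0 := by positivity
  set E := (s + 1) * (s - 2 * p) + p * s with hE_def
  field_simp
  rw [hE_def]
  ring

theorem neg_of_threshold_le (hs : 0 < s) (hs1 : s ≤ 1) (hp : 0 < p) (hps : 4 * p ≤ s ^ 2) {x : ℝ}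
    (hx : s * (s - 2 * p) * (s + 1) / (p * ((s + 1) * (s - 2 * p) + p * s)) ≤ x) :
    1 - p ^ 2 / ((s + 1) * s) - p * (p + s + 1) * (s + p + 2) / (s * (s + 1) * (s + 2)) * x < 0 := by
  have hE := denom_pos hs hs1 hp hps
  have hslope : 0 ≤ p * (p + s + 1) * (s + p + 2) / (s * (s + 1) * (s + 2)) := by positivity
  have hthreshold : 1 - p ^ 2 / ((s + 1) * s) - p * (p + s + 1) * (s + p + 2) / (s * (s + 1) * (s + 2))
      * (s * (s - 2 * p) * (s + 1) / (p * ((s + 1) * (s - 2 * p) + p * s))) < 0 := by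
    rw [value_at_threshold hs hp hE.ne']
    have hnum := mul_pos hp (quartic_pos hs hs1 hp hps)
    exact div_neg_of_neg_of_pos (by linarith) (by positivity)
  linarith [mul_le_mul_of_nonneg_left hx hslope]

end Threshold

theorem stmt_2 (a b : ℝ) (ha : 0 < a) (hb : 0 < b) (hab : a + b ≤ 1) (x : ℝ)
    (hx : (a + b) * (a + b - 2 * a * b) * (a + b + 1) /
      (a * b * ((a + b + 1) * (a + b - 2 * a * b) + a * b * (a + b))) ≤ x) :
    1 - a ^ 2 * b ^ 2 / ((a + b + 1) * (a + b))
      - a * b * (a + 1) * (b + 1) * (a + b + a * b + 2)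
        / ((a + b) * (a + b + 1) * (a + b + 2)) * x < 0 := by
  have hamgm : 4 * (a * b) ≤ (a + b) ^ 2 := by nlinarith [sq_nonneg (a - b)]
  have key := Threshold.neg_of_threshold_le (by positivity) hab (by positivity) hamgm
    (x := x) (by convert hx using 1; ring)
  convert key using 3 <;> ring
end

section
/- For a, b > 0 with a + b ≤ 1, the quantity Δ(0) = 1 - 4ab/(a+b) + 4(ab/(a+b))²·(1-a-b)/(a+b+1) is nonnegative, with equality if and only if a = b = 1/2. -/
theorem stmt_6 (a b : ℝ) (ha : 0 < a) (hb : 0 < b) (hab : a + b ≤ 1) :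
    0 ≤ 1 - 4 * (a * b) / (a + b) + 4 * (a * b / (a + b)) ^ 2 * (1 - a - b) / (a + b + 1) ∧
    (1 - 4 * (a * b) / (a + b) + 4 * (a * b / (a + b)) ^ 2 * (1 - a - b) / (a + b + 1) = 0
      ↔ a = 1/2 ∧ b = 1/2) := by
  have hs : 0 < a + b := by linarith
  have hs1 : 0 < a + b + 1 := by linarith
  have hden : 0 < (a + b) ^ 2 * (a + b + 1) := by positivity
  set E : ℝ := (a+b)^2*(a+b+1) - 4*(a*b)*(a+b)*(a+b+1) + 4*(a*b)^2*(1-a-b) with hEdef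
  have key : 1 - 4 * (a * b) / (a + b) + 4 * (a * b / (a + b)) ^ 2 * (1 - a - b) / (a + b + 1)
      = E / ((a + b) ^ 2 * (a + b + 1)) := by
    field_simp
    ring
  have hE : 0 ≤ E := by
    nlinarith [sq_nonneg (a-b), sq_nonneg ((a-b)*(a+b)), sq_nonneg ((a+b)^2 - 4*a*b),
      mul_nonneg (mul_nonneg (sq_nonneg (a-b)) hs.le) hs1.le,
      mul_nonneg (sq_nonneg ((a+b)^2 - 4*a*b)) (by linarith : (0:ℝ) ≤ 1 - (a+b)),
      mul_nonneg (mul_nonneg (mul_nonneg hs.le hs.le) hs1.le) (by linarith : (0:ℝ) ≤ 1 - (a+b))]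
  constructor
  · rw [key]
    exact div_nonneg hE hden.le
  · rw [key]
    constructor
    · intro h
      have hE0 : E = 0 := by
        field_simp at h
        linarith [h]
      have h1 : a + b = 1 := by
        nlinarith [sq_nonneg (a-b), mul_nonneg (mul_nonneg (sq_nonneg (a-b)) hs.le) hs1.le,
          mul_nonneg (sq_nonneg ((a+b)^2 - 4*a*b)) (by linarith : (0:ℝ) ≤ 1 - (a+b)),
          mul_nonneg (mul_nonneg (mul_nonneg hs.le hs.le) hs1.le) (by linarith : (0:ℝ) ≤ 1 - (a+b))]
      have hd : (a - b)^2 = 0 := by nlinarith [hE0, h1]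
      have hab' : a = b := by nlinarith [hd]
      constructor <;> linarith
    · rintro ⟨rfl, rfl⟩
      norm_num [hEdef]
end

section
/- For a, b > 0 with a + b ≤ 1 and for every natural number n ≥ 0, the coefficient αₙ = 1 + 4ab/(a+b+1+n) - 8ab(a+1)(b+1)/((a+b+1+n)(a+b+2+n)) satisfies αₙ ≥ (a+b-4ab+1)/(a+b+1) > 0. -/
theorem stmt_7 (a b : ℝ) (ha : 0 < a) (hb : 0 < b) (hab : a + b ≤ 1) (n : ℕ) :
    (a + b - 4 * a * b + 1) / (a + b + 1)
      ≤ 1 + 4 * a * b / (a + b + 1 + n)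
        - 8 * a * b * (a + 1) * (b + 1) / ((a + b + 1 + n) * (a + b + 2 + n)) ∧
    0 < (a + b - 4 * a * b + 1) / (a + b + 1) := by
  have hn : (0:ℝ) ≤ n := Nat.cast_nonneg n
  have h1 : (0:ℝ) < a + b + 1 := by linarith
  have h2 : (0:ℝ) < a + b + 1 + n := by linarith
  have h3 : (0:ℝ) < a + b + 2 + n := by linarith
  have hab1 : a * b ≤ 1 := by nlinarith [sq_nonneg (a - b)]
  have hab4 : 4 * a * b ≤ a + b := by nlinarith [sq_nonneg (a - b)]
  have hpos : 0 < a * b := mul_pos ha hb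
  constructor
  · have key : 8 * a * b * (a + 1) * (b + 1) / ((a + b + 1 + n) * (a + b + 2 + n))
        ≤ 4 * a * b / (a + b + 1) + 4 * a * b / (a + b + 1 + n) := by
      rw [div_add_div _ _ (ne_of_gt h1) (ne_of_gt h2),
        div_le_div_iff₀ (by positivity) (by positivity)]
      nlinarith [mul_pos h2 h3, mul_pos h1 h3, mul_nonneg (mul_nonneg hpos.le h3.le) hn,
        mul_nonneg (mul_nonneg hpos.le h1.le) hn,
        mul_nonneg (mul_nonneg (mul_nonneg hpos.le h1.le) h3.le) hn,
        mul_pos (mul_pos hpos h1) h3, mul_nonneg (mul_pos hpos h1).le (by linarith : (0:ℝ) ≤ 1 + n - a * b)]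
    have heq : (a + b - 4 * a * b + 1) / (a + b + 1) = 1 - 4 * a * b / (a + b + 1) := by
      field_simp
      ring
    linarith
  · apply div_pos _ h1
    linarith
end

section
/- For fixed b ∈ (0,1), the function G_b(x) = B(x,b) - 1/x admits the representation G_b(x) = ∫₀¹ t^{x-1}((1-t)^{b-1} - 1) dt for x > 0, and is strictly completely monotonic on (0, ∞); moreover lim_{x→∞} G_b(x) = 0 and lim_{x→0⁺} G_b(x) = -γ - ψ(b). -/
/-- The digamma function ψ = Γ'/Γ, as the derivative of log ∘ Γ. -/
noncomputable def digamma (x : ℝ) : ℝ := deriv (fun y => Real.log (Real.Gamma y)) x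

/-- The Euler–Mascheroni constant γ = -ψ(1). -/
noncomputable def eulerGamma : ℝ := -digamma 1

/-!
Since `B(x, b) = ∫₀¹ t^(x-1) (1-t)^(b-1) dt` and `1/x = ∫₀¹ t^(x-1) dt`, the function `G_b` is the
integral of `t^(x-1)` against the weight `w(t) = (1-t)^(b-1) - 1`, which is positive on `(0, 1)`
when `b < 1`. Differentiating under the integral sign (the factor `|log t|^n` is absorbed by
`t^(x/2)`) gives `(-1)^n G_b^(n)(x) = ∫₀¹ (-log t)^n t^(x-1) w(t) dt > 0`, and dominated convergence
gives `G_b(x) → 0` as `x → ∞`. Near `0`, `G_b(x) = (Γ(x+1)Γ(b)/Γ(x+b) - 1)/x` is a difference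
quotient at `0` of a function whose logarithm has derivative `ψ(1) - ψ(b)` there.
-/

open MeasureTheory Real Set Filter Topology
open scoped Nat

lemma ofReal_rpow_mul_one_sub_rpow {x b t : ℝ} (ht : t ∈ Ioo (0 : ℝ) 1) :
    ((t ^ (x - 1) * (1 - t) ^ (b - 1) : ℝ) : ℂ)
      = (t : ℂ) ^ ((x : ℂ) - 1) * (1 - (t : ℂ)) ^ ((b : ℂ) - 1) := by
  rw [Complex.ofReal_mul, Complex.ofReal_cpow ht.1.le, Complex.ofReal_cpow (sub_nonneg.2 ht.2.le)]
  push_cast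
  rfl

lemma integrableOn_rpow_mul_one_sub_rpow {x b : ℝ} (hx : 0 < x) (hb : 0 < b) :
    IntegrableOn (fun t : ℝ => t ^ (x - 1) * (1 - t) ^ (b - 1)) (Ioo 0 1) := by
  have h := (intervalIntegrable_iff_integrableOn_Ioo_of_le zero_le_one).1
    (Complex.betaIntegral_convergent (u := x) (v := b) (by simpa) (by simpa))
  refine IntegrableOn.congr_fun (Integrable.re h) (fun t ht => ?_) measurableSet_Ioo
  simp [← ofReal_rpow_mul_one_sub_rpow ht]

theorem Gamma_mul_Gamma_div_Gamma_add_eq_integral {x b : ℝ} (hx : 0 < x) (hb : 0 < b) :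
    Gamma x * Gamma b / Gamma (x + b) = ∫ t in Ioo 0 1, t ^ (x - 1) * (1 - t) ^ (b - 1) := by
  apply Complex.ofReal_injective
  rw [← integral_complex_ofReal, setIntegral_congr_fun measurableSet_Ioo
      (fun t ht => ofReal_rpow_mul_one_sub_rpow ht), ← integral_Ioc_eq_integral_Ioo,
    ← intervalIntegral.integral_of_le zero_le_one, ← Complex.betaIntegral,
    Complex.betaIntegral_eq_Gamma_mul_div _ _ (by simpa) (by simpa)]
  push_cast [← Complex.Gamma_ofReal]
  rfl

lemma integral_Ioo_rpow_sub_one {x : ℝ} (hx : 0 < x) : ∫ t in Ioo 0 1, t ^ (x - 1) = 1 / x := by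
  rw [← integral_Ioc_eq_integral_Ioo, ← intervalIntegral.integral_of_le zero_le_one,
    integral_rpow (Or.inl (by linarith)), sub_add_cancel, zero_rpow hx.ne', one_rpow]
  ring

lemma integrableOn_rpow_mul_one_sub_rpow_sub_one {x b : ℝ} (hx : 0 < x) (hb : 0 < b) :
    IntegrableOn (fun t : ℝ => t ^ (x - 1) * ((1 - t) ^ (b - 1) - 1)) (Ioo 0 1) :=
  IntegrableOn.congr_fun ((integrableOn_rpow_mul_one_sub_rpow hx hb).sub
    ((intervalIntegral.integrableOn_Ioo_rpow_iff (s := x - 1) one_pos).2 (by linarith)))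
    (fun t _ => by simp only [Pi.sub_apply]; ring) measurableSet_Ioo

theorem Gamma_mul_Gamma_div_Gamma_add_sub_inv_eq_integral {x b : ℝ} (hx : 0 < x) (hb : 0 < b) :
    Gamma x * Gamma b / Gamma (x + b) - 1 / x
      = ∫ t in Ioo 0 1, t ^ (x - 1) * ((1 - t) ^ (b - 1) - 1) := by
  simp_rw [mul_sub, mul_one]
  rw [integral_sub (integrableOn_rpow_mul_one_sub_rpow hx hb)
      ((intervalIntegral.integrableOn_Ioo_rpow_iff (s := x - 1) one_pos).2 (by linarith)),
    Gamma_mul_Gamma_div_Gamma_add_eq_integral hx hb, integral_Ioo_rpow_sub_one hx]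

lemma one_sub_rpow_sub_one_pos {b t : ℝ} (hb : b < 1) (ht : t ∈ Ioo (0 : ℝ) 1) :
    0 < (1 - t) ^ (b - 1) - 1 :=
  sub_pos.2 (one_lt_rpow_of_pos_of_lt_one_of_neg (by linarith [ht.2]) (by linarith [ht.1])
    (by linarith))

lemma abs_log_pow_mul_rpow_le (n : ℕ) {ε t : ℝ} (hε : 0 < ε) (ht0 : 0 < t) (ht1 : t ≤ 1) :
    |log t| ^ n * t ^ ε ≤ n ! / ε ^ n := by
  have hlog : log t ≤ 0 := log_nonpos ht0.le ht1
  have hexp : t ^ ε = exp (-(ε * -log t)) := by rw [rpow_def_of_pos ht0]; ring_nf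
  -- `(ε u)^n / n! ≤ exp (ε u)` with `u = -log t`
  have key := Real.pow_div_factorial_le_exp _ (mul_nonneg hε.le (neg_nonneg.2 hlog)) n
  rw [div_le_iff₀ (by positivity), mul_pow, ← le_div_iff₀' (by positivity)] at key
  rw [abs_of_nonpos hlog, hexp, exp_neg, ← div_eq_mul_inv, div_le_iff₀ (exp_pos _)]
  calc (-log t) ^ n ≤ exp (ε * -log t) * n ! / ε ^ n := key
    _ = _ := by ring

section LogMoments

variable {w : ℝ → ℝ}

lemma integrableOn_log_pow_mul_rpow_mul
    (hw : ∀ x > (0 : ℝ), IntegrableOn (fun t => t ^ (x - 1) * w t) (Ioo 0 1)) (n : ℕ) {x : ℝ}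
    (hx : 0 < x) : IntegrableOn (fun t => log t ^ n * (t ^ (x - 1) * w t)) (Ioo 0 1) := by
  have hcont : ContinuousOn (fun t => log t ^ n * t ^ (x / 2)) (Ioo 0 1) := fun t ht =>
    (((continuousAt_log ht.1.ne').pow n).mul
      (continuousAt_rpow_const _ _ (Or.inr (half_pos hx).le))).continuousWithinAt
  have hbound : ∀ t ∈ Ioo (0 : ℝ) 1, ‖log t ^ n * t ^ (x / 2)‖ ≤ n ! / (x / 2) ^ n := by
    intro t ht
    rw [norm_mul, norm_pow, norm_eq_abs, norm_of_nonneg (rpow_nonneg ht.1.le _)]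
    exact abs_log_pow_mul_rpow_le n (half_pos hx) ht.1 ht.2.le
  refine IntegrableOn.congr_fun ((hw (x / 2) (half_pos hx)).bdd_mul
    (hcont.aestronglyMeasurable measurableSet_Ioo)
    (ae_restrict_of_forall_mem measurableSet_Ioo hbound)) (fun t ht => ?_) measurableSet_Ioo
  rw [mul_assoc, ← mul_assoc (t ^ (x / 2)), ← rpow_add ht.1]
  ring_nf

lemma hasDerivAt_integral_log_pow_mul_rpow_mul
    (hw : ∀ x > (0 : ℝ), IntegrableOn (fun t => t ^ (x - 1) * w t) (Ioo 0 1)) (n : ℕ) {x : ℝ}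
    (hx : 0 < x) :
    HasDerivAt (fun y => ∫ t in Ioo 0 1, log t ^ n * (t ^ (y - 1) * w t))
      (∫ t in Ioo 0 1, log t ^ (n + 1) * (t ^ (x - 1) * w t)) x := by
  refine (hasDerivAt_integral_of_dominated_loc_of_deriv_le (Ioi_mem_nhds (half_lt_self hx))
    (μ := volume.restrict (Ioo 0 1))
    (F := fun y t => log t ^ n * (t ^ (y - 1) * w t))
    (F' := fun y t => log t ^ (n + 1) * (t ^ (y - 1) * w t))
    (bound := fun t => ‖log t ^ (n + 1) * (t ^ (x / 2 - 1) * w t)‖) ?_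
    (integrableOn_log_pow_mul_rpow_mul hw n hx)
    (integrableOn_log_pow_mul_rpow_mul hw (n + 1) hx).aestronglyMeasurable ?_
    (integrableOn_log_pow_mul_rpow_mul hw (n + 1) (half_pos hx)).norm ?_).2
  · filter_upwards [Ioi_mem_nhds hx] with y hy
    exact (integrableOn_log_pow_mul_rpow_mul hw n hy).aestronglyMeasurable
  · refine ae_restrict_of_forall_mem measurableSet_Ioo fun t ht y hy => ?_
    simp only [norm_mul]
    gcongr
    rw [norm_of_nonneg (rpow_nonneg ht.1.le _), norm_of_nonneg (rpow_nonneg ht.1.le _)]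
    exact rpow_le_rpow_of_exponent_ge ht.1 ht.2.le (by linarith [mem_Ioi.1 hy])
  · refine ae_restrict_of_forall_mem measurableSet_Ioo fun t ht y _ => ?_
    exact ((((hasDerivAt_id' y).sub_const 1).const_rpow ht.1).mul_const (w t)
      |>.const_mul (log t ^ n)).congr_deriv (by ring)

lemma iteratedDeriv_integral_rpow_mul
    (hw : ∀ x > (0 : ℝ), IntegrableOn (fun t => t ^ (x - 1) * w t) (Ioo 0 1)) (n : ℕ) {x : ℝ}
    (hx : 0 < x) :
    iteratedDeriv n (fun y => ∫ t in Ioo 0 1, t ^ (y - 1) * w t) x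
      = ∫ t in Ioo 0 1, log t ^ n * (t ^ (x - 1) * w t) := by
  induction n generalizing x with
  | zero => simp
  | succ n ih =>
    rw [iteratedDeriv_succ, (EqOn.eventuallyEq_of_mem (fun y hy => ih hy)
      (Ioi_mem_nhds hx)).deriv_eq]
    exact (hasDerivAt_integral_log_pow_mul_rpow_mul hw n hx).deriv

lemma neg_one_pow_mul_iteratedDeriv_integral_rpow_mul_pos
    (hw : ∀ x > (0 : ℝ), IntegrableOn (fun t => t ^ (x - 1) * w t) (Ioo 0 1))
    (hw_pos : ∀ t ∈ Ioo (0 : ℝ) 1, 0 < w t) (n : ℕ) {x : ℝ} (hx : 0 < x) :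
    0 < (-1) ^ n * iteratedDeriv n (fun y => ∫ t in Ioo 0 1, t ^ (y - 1) * w t) x := by
  have hpos : ∀ t ∈ Ioo (0 : ℝ) 1, 0 < (-1) ^ n * (log t ^ n * (t ^ (x - 1) * w t)) := by
    intro t ht
    rw [← mul_assoc, ← mul_pow, neg_one_mul]
    exact mul_pos (pow_pos (neg_pos.2 (log_neg ht.1 ht.2)) n)
      (mul_pos (rpow_pos_of_pos ht.1 _) (hw_pos t ht))
  rw [iteratedDeriv_integral_rpow_mul hw n hx, ← integral_const_mul,
    setIntegral_pos_iff_support_of_nonneg_ae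
      (ae_restrict_of_forall_mem measurableSet_Ioo fun t ht => (hpos t ht).le)
      ((integrableOn_log_pow_mul_rpow_mul hw n hx).const_mul _)]
  refine (show (0 : ENNReal) < volume (Ioo (0 : ℝ) 1) by simp).trans_le
    (measure_mono fun t ht => ?_)
  exact ⟨(hpos t ht).ne', ht⟩

lemma tendsto_integral_rpow_mul_atTop (hw : IntegrableOn w (Ioo 0 1)) :
    Tendsto (fun x : ℝ => ∫ t in Ioo 0 1, t ^ (x - 1) * w t) atTop (𝓝 0) := by
  have hlim := tendsto_integral_filter_of_dominated_convergence (fun t => ‖w t‖)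
    (l := (atTop : Filter ℝ)) (F := fun x t => t ^ (x - 1) * w t) (f := fun _ => 0)
    ?_ ?_ hw.norm ?_
  · simpa using hlim
  · refine Eventually.of_forall fun x => ?_
    refine (ContinuousOn.aestronglyMeasurable (fun t ht => ?_) measurableSet_Ioo).mul
      hw.aestronglyMeasurable
    exact (continuousAt_rpow_const _ _ (Or.inl ht.1.ne')).continuousWithinAt
  · filter_upwards [eventually_ge_atTop 1] with x hx
    refine ae_restrict_of_forall_mem measurableSet_Ioo fun t ht => ?_
    rw [norm_mul, norm_of_nonneg (rpow_nonneg ht.1.le _)]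
    exact mul_le_of_le_one_left (norm_nonneg _) (rpow_le_one ht.1.le ht.2.le (by linarith))
  · refine ae_restrict_of_forall_mem measurableSet_Ioo fun t ht => ?_
    simpa [sub_eq_add_neg] using
      ((tendsto_rpow_atTop_of_base_lt_one t (by linarith [ht.1]) ht.2).comp
        (tendsto_atTop_add_const_right _ (-1) tendsto_id)).mul_const (w t)

end LogMoments

lemma hasDerivAt_log_Gamma {c : ℝ} (hc : 0 < c) :
    HasDerivAt (fun y => log (Gamma y)) (digamma c) c :=
  ((differentiableAt_Gamma fun m => by linarith [(Nat.cast_nonneg m : (0 : ℝ) ≤ m)]).log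
    (Gamma_pos_of_pos hc).ne').hasDerivAt

theorem tendsto_Gamma_mul_Gamma_div_Gamma_add_sub_inv_nhdsGT_zero {b : ℝ} (hb : 0 < b) :
    Tendsto (fun x => Gamma x * Gamma b / Gamma (x + b) - 1 / x) (𝓝[>] 0)
      (𝓝 (-eulerGamma - digamma b)) := by
  set L : ℝ → ℝ := fun x => log (Gamma (x + 1)) + log (Gamma b) - log (Gamma (x + b))
  have hL0 : L 0 = 0 := by simp [L]
  have hL : HasDerivAt L (digamma 1 - digamma b) 0 :=
    ((HasDerivAt.comp_add_const 0 1 (by simpa using hasDerivAt_log_Gamma one_pos)).add_const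
      _).sub (HasDerivAt.comp_add_const 0 b (by simpa using hasDerivAt_log_Gamma hb))
  have hexpL : HasDerivAt (fun x => exp (L x)) (digamma 1 - digamma b) 0 := by
    simpa [hL0] using hL.exp
  have hslope := (hasDerivAt_iff_tendsto_slope.1 hexpL).mono_left (nhdsGT_le_nhdsNE (0 : ℝ))
  rw [eulerGamma, neg_neg]
  refine hslope.congr' (eventually_nhdsWithin_of_forall fun x (hx : 0 < x) => ?_)
  have hexp : exp (L x) = Gamma (x + 1) * Gamma b / Gamma (x + b) := by
    simp only [L, exp_sub, exp_add, exp_log (Gamma_pos_of_pos (by linarith : 0 < x + 1)),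
      exp_log (Gamma_pos_of_pos hb), exp_log (Gamma_pos_of_pos (by linarith : 0 < x + b))]
  rw [slope_def_field, hexp, hL0, exp_zero, sub_zero, Gamma_add_one hx.ne']
  field_simp

theorem stmt_11 (b : ℝ) (hb : b ∈ Set.Ioo (0:ℝ) 1) :
    (∀ x > 0,
      Real.Gamma x * Real.Gamma b / Real.Gamma (x + b) - 1 / x
        = ∫ t in (0:ℝ)..1, t ^ (x - 1) * ((1 - t) ^ (b - 1) - 1)) ∧
    (∀ n : ℕ, ∀ x > 0,
      0 < (-1) ^ n * iteratedDeriv n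
        (fun y => Real.Gamma y * Real.Gamma b / Real.Gamma (y + b) - 1 / y) x) ∧
    Filter.Tendsto (fun x => Real.Gamma x * Real.Gamma b / Real.Gamma (x + b) - 1 / x)
      Filter.atTop (nhds 0) ∧
    Filter.Tendsto (fun x => Real.Gamma x * Real.Gamma b / Real.Gamma (x + b) - 1 / x)
      (nhdsWithin 0 (Set.Ioi 0)) (nhds (-eulerGamma - digamma b)) := by
  have hrepr : EqOn (fun x => Gamma x * Gamma b / Gamma (x + b) - 1 / x)
      (fun x => ∫ t in Ioo 0 1, t ^ (x - 1) * ((1 - t) ^ (b - 1) - 1)) (Ioi 0) :=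
    fun x hx => Gamma_mul_Gamma_div_Gamma_add_sub_inv_eq_integral hx hb.1
  have hw : ∀ x > (0 : ℝ),
      IntegrableOn (fun t : ℝ => t ^ (x - 1) * ((1 - t) ^ (b - 1) - 1)) (Ioo 0 1) :=
    fun x hx => integrableOn_rpow_mul_one_sub_rpow_sub_one hx hb.1
  refine ⟨fun x hx => ?_, fun n x hx => ?_, ?_,
    tendsto_Gamma_mul_Gamma_div_Gamma_add_sub_inv_nhdsGT_zero hb.1⟩
  · rw [intervalIntegral.integral_of_le zero_le_one, integral_Ioc_eq_integral_Ioo]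
    exact hrepr hx
  · rw [(hrepr.eventuallyEq_of_mem (Ioi_mem_nhds hx)).iteratedDeriv_eq n]
    exact neg_one_pow_mul_iteratedDeriv_integral_rpow_mul_pos hw
      (fun t ht => one_sub_rpow_sub_one_pos hb.2 ht) n hx
  · refine (tendsto_integral_rpow_mul_atTop (by simpa using hw 1 one_pos)).congr' ?_
    filter_upwards [eventually_gt_atTop 0] with x hx using (hrepr hx).symm
end

section
/- For all integers k ≥ 1 and n ≥ 1, the quantity u_{2k-1}(n) + u_{2k}(n) is strictly positive, where u_k(n) = 1/(2k+1)^{2n+1} - (4/5)·Σ_{m=0}^{n} (-1)^k / (5^{n-m} (2k+1)^{2m+1}); moreover u₀(n) = 1/5^{n+1} > 0. -/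
/-- u_k(n) = 1/(2k+1)^{2n+1} − (4/5)·Σ_{m=0}^{n} (−1)^k / (5^{n−m}(2k+1)^{2m+1}). -/
noncomputable def uCoeff (k n : ℕ) : ℝ :=
  1 / (2 * (k : ℝ) + 1) ^ (2 * n + 1)
    - (4/5) * ∑ m ∈ Finset.range (n + 1),
        (-1 : ℝ) ^ k / (5 ^ (n - m) * (2 * (k : ℝ) + 1) ^ (2 * m + 1))

theorem stmt_19 :
    (∀ k : ℕ, 1 ≤ k → ∀ n : ℕ, 1 ≤ n → 0 < uCoeff (2 * k - 1) n + uCoeff (2 * k) n) ∧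
    (∀ n : ℕ, uCoeff 0 n = 1 / 5 ^ (n + 1)) := by
  constructor
  · intro k hk n hn
    obtain ⟨j, rfl⟩ := Nat.exists_eq_add_of_le hk
    unfold uCoeff
    have h1 : 2 * (1 + j) - 1 = 2 * j + 1 := by omega
    have h2 : 2 * (1 + j) = 2 * j + 2 := by omega
    rw [h1, h2]
    have hodd : (-1 : ℝ) ^ (2 * j + 1) = -1 := Odd.neg_one_pow ⟨j, by ring⟩
    have heven : (-1 : ℝ) ^ (2 * j + 2) = 1 := Even.neg_one_pow ⟨j + 1, by ring⟩
    rw [hodd, heven]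
    set a : ℝ := 2 * ((2 * j + 1 : ℕ) : ℝ) + 1 with hA
    set b : ℝ := 2 * ((2 * j + 2 : ℕ) : ℝ) + 1 with hB
    have ha : (0:ℝ) < a := by rw [hA]; positivity
    have hb : (0:ℝ) < b := by rw [hB]; positivity
    have hab : a ≤ b := by rw [hA, hB]; push_cast; linarith
    have hS : ∑ m ∈ Finset.range (n + 1), (1:ℝ) / (5 ^ (n - m) * b ^ (2 * m + 1))
        ≤ ∑ m ∈ Finset.range (n + 1), (1:ℝ) / (5 ^ (n - m) * a ^ (2 * m + 1)) := by
      apply Finset.sum_le_sum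
      intro m _
      apply one_div_le_one_div_of_le
      · positivity
      · apply mul_le_mul_of_nonneg_left _ (by positivity)
        exact pow_le_pow_left₀ ha.le hab _
    have hSa : (0:ℝ) ≤ ∑ m ∈ Finset.range (n + 1), (1:ℝ) / (5 ^ (n - m) * a ^ (2 * m + 1)) := by
      apply Finset.sum_nonneg; intro m _; positivity
    have h1a : (0:ℝ) < 1 / a ^ (2 * n + 1) := by positivity
    have h1b : (0:ℝ) < 1 / b ^ (2 * n + 1) := by positivity
    simp only [neg_div, Finset.sum_neg_distrib]
    linarith
  · intro n
    induction n with
    | zero => norm_num [uCoeff]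
    | succ n ih =>
      have hstep : uCoeff 0 (n + 1) = uCoeff 0 n / 5 := by
        unfold uCoeff
        simp only [Nat.cast_zero, mul_zero, zero_add, one_pow, pow_zero, mul_one]
        rw [Finset.sum_range_succ]
        have hsub : ∀ m ∈ Finset.range (n + 1),
            (1:ℝ) / 5 ^ (n + 1 - m) = (1 / 5) * (1 / 5 ^ (n - m)) := by
          intro m hm
          rw [Finset.mem_range] at hm
          have : n + 1 - m = (n - m) + 1 := by omega
          rw [this]
          ring
        rw [Finset.sum_congr rfl hsub, ← Finset.mul_sum]
        simp
        ring
      rw [hstep, ih]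
      rw [pow_succ]
      ring
end
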